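/- (Kantorovich-type convergence of the sparse-Newton method) Let P : ℝⁿ → ℝᵐ be continuously differentiable, u⁰ ∈ ℝⁿ, s = ‖P(u⁰)‖_∞, ρ > 0, B_ρ = {u : ‖u − u⁰‖₁ ≤ ρ}. Assume: (A) there is μ₀ > 0 with ‖P'(u⁰)ᵀh‖_∞ ≥ μ₀‖h‖₁ for all h ∈ ℝᵐ; (B) there is L > 0 with ‖(P'(a) − P'(b))v‖_∞ ≤ L‖a−b‖₁‖v‖₁ for all a, b ∈ B_ρ and v ∈ ℝⁿ; and the conditions h := Ls/μ₀² < 1/2 and ((1 − √(1−2h))/h)·(s/μ₀) ≤ ρ hold. Then every sparse-Newton sequence (uᵏ) from u⁰ with unit step-size is well defined (in particular every P'(uᵏ) is surjective), remains in B_ρ, and converges to a point u* with P(u*) = 0 and ‖u⁰ − u*‖₁ ≤ (μ₀/L)·(1 − √(1 − 2Ls/μ₀²)). -/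

import Mathlib

open Filter Topology

/-- The ℓ1-norm on `ℝ^d`: `‖x‖₁ = Σᵢ |xᵢ|`. -/
noncomputable def l1Norm {d : ℕ} (x : Fin d → ℝ) : ℝ := ∑ i, |x i|

/-- The ℓ∞-norm on `ℝ^d`: `‖x‖_∞ = maxᵢ |xᵢ|`. -/
noncomputable def linfNorm {d : ℕ} (x : Fin d → ℝ) : ℝ := ⨆ i, |x i|

/-- The transpose of a continuous linear map `A : ℝⁿ → ℝᵐ` applied to `h ∈ ℝᵐ`:
`(Aᵀ h)ᵢ = Σⱼ Aⱼᵢ hⱼ` where `Aⱼᵢ = (A eᵢ)ⱼ`. -/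
noncomputable def transposeApply {n m : ℕ} (A : (Fin n → ℝ) →L[ℝ] (Fin m → ℝ))
    (h : Fin m → ℝ) : Fin n → ℝ :=
  fun i => ∑ j, A (Pi.single i 1) j * h j


/-!
Kantorovich's majorant argument, with `ℓ¹` on the domain and `ℓ∞` on the target. By Hahn–Banach
separation, condition (A) at a point `u` with constant `κ > 0` means that `P'(u)` maps the
`ℓ¹`-ball of radius `r` onto a set containing the `ℓ∞`-ball of radius `κ r`. By (B) this holds at
every `u ∈ B_ρ` with `κ = μ₀ - L ‖u - u⁰‖₁`, so the minimal-norm Newton step satisfies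
`κ ‖w‖₁ ≤ ‖P u‖∞`, and Taylor's formula gives `‖P (u - w)‖∞ ≤ L/2 ‖w‖₁²`. These are exactly the
relations of the scalar Newton iteration `tₖ` for `f t = L/2 t² - μ₀ t + s` started at `0`, so
inductively `‖uᵏ - u⁰‖₁ ≤ tₖ` and `‖P uᵏ‖∞ ≤ f tₖ`. The `tₖ` increase to the smaller root
`t* = μ₀/L (1 - √(1 - 2h))` of `f`, which makes `(uᵏ)` Cauchy, confines it to the ball of radius
`t*`, and forces `P uᵏ → 0`.
-/

open Matrix

section Norms

variable {d : ℕ}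

theorem l1Norm_eq_norm_toLp (x : Fin d → ℝ) : l1Norm x = ‖WithLp.toLp 1 x‖ := by
  simp [l1Norm, PiLp.norm_eq_of_L1]

theorem l1Norm_nonneg (x : Fin d → ℝ) : 0 ≤ l1Norm x := by
  rw [l1Norm_eq_norm_toLp]; positivity

theorem l1Norm_smul (c : ℝ) (x : Fin d → ℝ) : l1Norm (c • x) = |c| * l1Norm x := by
  simp only [l1Norm_eq_norm_toLp, WithLp.toLp_smul, norm_smul, Real.norm_eq_abs]

theorem l1Norm_neg (x : Fin d → ℝ) : l1Norm (-x) = l1Norm x := by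
  simp only [l1Norm_eq_norm_toLp, WithLp.toLp_neg, norm_neg]

theorem l1Norm_sub_le (x y : Fin d → ℝ) : l1Norm (x - y) ≤ l1Norm x + l1Norm y := by
  simpa only [l1Norm_eq_norm_toLp, WithLp.toLp_sub] using norm_sub_le _ _

theorem l1Norm_sub_comm (x y : Fin d → ℝ) : l1Norm (x - y) = l1Norm (y - x) := by
  simp only [l1Norm_eq_norm_toLp, WithLp.toLp_sub, norm_sub_rev]

theorem continuous_l1Norm : Continuous (l1Norm (d := d)) := by
  simp only [funext l1Norm_eq_norm_toLp]
  exact (PiLp.continuous_toLp 1 _).norm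

theorem norm_le_l1Norm (x : Fin d → ℝ) : ‖x‖ ≤ l1Norm x :=
  (pi_norm_le_iff_of_nonneg (l1Norm_nonneg x)).2 fun i =>
    Finset.single_le_sum (f := fun i => |x i|) (fun _ _ => abs_nonneg _) (Finset.mem_univ i)

theorem convex_setOf_l1Norm_sub_le (c : Fin d → ℝ) (r : ℝ) :
    Convex ℝ {v | l1Norm (v - c) ≤ r} := by
  simpa [l1Norm_eq_norm_toLp, dist_eq_norm, Set.preimage] using
    (convex_closedBall (WithLp.toLp 1 c) r).linear_preimage
      (WithLp.linearEquiv 1 ℝ (Fin d → ℝ)).symm.toLinearMap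

theorem linfNorm_eq_norm (x : Fin d → ℝ) : linfNorm x = ‖x‖ :=
  le_antisymm (Real.iSup_le (fun i => norm_le_pi_norm x i) (norm_nonneg x))
    ((pi_norm_le_iff_of_nonneg (Real.iSup_nonneg fun i => abs_nonneg (x i))).2
      fun i => le_ciSup (f := fun i => |x i|) (Finite.bddAbove_range _) i)

theorem linfNorm_nonneg (x : Fin d → ℝ) : 0 ≤ linfNorm x := by
  rw [linfNorm_eq_norm]; positivity

theorem dotProduct_le_l1Norm_mul_linfNorm (v x : Fin d → ℝ) : v ⬝ᵥ x ≤ l1Norm v * linfNorm x := by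
  rw [linfNorm_eq_norm, l1Norm, Finset.sum_mul]
  exact Finset.sum_le_sum fun i _ => (le_abs_self _).trans <| by
    rw [abs_mul]; exact mul_le_mul_of_nonneg_left (norm_le_pi_norm x i) (abs_nonneg _)

theorem exists_l1Norm_le_one_dotProduct_eq_linfNorm (x : Fin d → ℝ) :
    ∃ v, l1Norm v ≤ 1 ∧ v ⬝ᵥ x = linfNorm x := by
  rw [linfNorm_eq_norm]
  rcases isEmpty_or_nonempty (Fin d) with _ | _
  · exact ⟨0, by simp [l1Norm], by simp [Subsingleton.elim x 0]⟩
  obtain ⟨i, hi⟩ := Finite.exists_max fun i => |x i|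
  refine ⟨Pi.single i (SignType.sign (x i) : ℝ), ?_, ?_⟩
  · rcases lt_trichotomy (x i) 0 with h | h | h <;> simp [l1Norm, Pi.single_apply, apply_ite abs, h]
  · rw [single_dotProduct, sign_mul_self]
    refine le_antisymm (by simpa using norm_le_pi_norm x i) ?_
    exact (pi_norm_le_iff_of_nonneg (abs_nonneg _)).2 hi

end Norms

section Transpose

variable {n m : ℕ}

theorem transposeApply_eq_vecMul (A : (Fin n → ℝ) →L[ℝ] (Fin m → ℝ)) (h : Fin m → ℝ) :
    transposeApply A h = h ᵥ* LinearMap.toMatrix' (A : (Fin n → ℝ) →ₗ[ℝ] (Fin m → ℝ)) := by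
  ext i
  simp [transposeApply, vecMul, dotProduct, LinearMap.toMatrix'_apply, mul_comm]

theorem dotProduct_transposeApply (A : (Fin n → ℝ) →L[ℝ] (Fin m → ℝ)) (v : Fin n → ℝ)
    (h : Fin m → ℝ) : v ⬝ᵥ transposeApply A h = A v ⬝ᵥ h := by
  rw [transposeApply_eq_vecMul, dotProduct_comm, ← dotProduct_mulVec, LinearMap.toMatrix'_mulVec,
    dotProduct_comm]
  rfl

theorem exists_l1Norm_le_apply_eq (A : (Fin n → ℝ) →L[ℝ] (Fin m → ℝ)) {μ r : ℝ} (hr : 0 ≤ r)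
    (hA : ∀ h, μ * l1Norm h ≤ linfNorm (transposeApply A h)) {c : Fin m → ℝ}
    (hc : linfNorm c ≤ μ * r) : ∃ v, l1Norm v ≤ r ∧ A v = c := by
  set K := {v : Fin n → ℝ | l1Norm v ≤ r}
  have hKconv : Convex ℝ K := by simpa using convex_setOf_l1Norm_sub_le (0 : Fin n → ℝ) r
  have hKcpt : IsCompact K := by
    refine Metric.isCompact_of_isClosed_isBounded (isClosed_le continuous_l1Norm continuous_const)
      ((Metric.isBounded_closedBall (x := 0) (r := r)).subset fun v hv => ?_)
    simpa using (norm_le_l1Norm v).trans hv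
  -- a functional `⟨·, h⟩` separating `c` from `A K` would give
  -- `r ‖Aᵀ h‖∞ < ⟨c, h⟩ ≤ μ r ‖h‖₁`, against (A)
  by_contra! hcK
  obtain ⟨f, a, hfK, hfc⟩ := geometric_hahn_banach_closed_point (hKconv.linear_image A)
    (hKcpt.image A.continuous).isClosed (x := c) fun ⟨v, hv, hvc⟩ => hcK v hv hvc
  set h : Fin m → ℝ := fun j => f (Pi.single j 1)
  have hf : ∀ y, f y = y ⬝ᵥ h := fun y => by
    conv_lhs => rw [pi_eq_sum_univ' y]
    simp [map_sum, map_smul, dotProduct, h]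
  obtain ⟨v, hv1, hv⟩ := exists_l1Norm_le_one_dotProduct_eq_linfNorm (transposeApply A h)
  have hrv : r • v ∈ K := by
    simpa [K, l1Norm_smul, abs_of_nonneg hr] using mul_le_of_le_one_right hr hv1
  have hfrv : f (A (r • v)) = r * linfNorm (transposeApply A h) := by
    rw [hf, map_smul, smul_dotProduct, ← dotProduct_transposeApply, hv, smul_eq_mul]
  have hfc_le : f c ≤ l1Norm h * (μ * r) := by
    rw [hf, dotProduct_comm]
    exact (dotProduct_le_l1Norm_mul_linfNorm h c).trans
      (mul_le_mul_of_nonneg_left hc (l1Norm_nonneg h))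
  have hfA : f (A (r • v)) < a := hfK _ ⟨_, hrv, rfl⟩
  nlinarith [mul_le_mul_of_nonneg_left (hA h) hr]

theorem exists_apply_eq_of_le_linfNorm_transposeApply (A : (Fin n → ℝ) →L[ℝ] (Fin m → ℝ))
    {μ : ℝ} (hμ : 0 < μ) (hA : ∀ h, μ * l1Norm h ≤ linfNorm (transposeApply A h))
    (b : Fin m → ℝ) : ∃ v, A v = b ∧ μ * l1Norm v ≤ linfNorm b := by
  obtain ⟨v, hv, hvb⟩ := exists_l1Norm_le_apply_eq A
    (div_nonneg (linfNorm_nonneg b) hμ.le) hA (mul_div_cancel₀ _ hμ.ne').ge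
  exact ⟨v, hvb, (le_div_iff₀' hμ).1 hv⟩

theorem transposeApply_sub (A B : (Fin n → ℝ) →L[ℝ] (Fin m → ℝ)) (h : Fin m → ℝ) :
    transposeApply (A - B) h = transposeApply A h - transposeApply B h := by
  ext i
  simp [transposeApply, sub_mul]

theorem linfNorm_transposeApply_le (M : (Fin n → ℝ) →L[ℝ] (Fin m → ℝ)) {C : ℝ} (hC : 0 ≤ C)
    (hM : ∀ v, linfNorm (M v) ≤ C * l1Norm v) (h : Fin m → ℝ) :
    linfNorm (transposeApply M h) ≤ C * l1Norm h := by
  obtain ⟨v, hv1, hv⟩ := exists_l1Norm_le_one_dotProduct_eq_linfNorm (transposeApply M h)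
  rw [← hv, dotProduct_transposeApply, dotProduct_comm]
  calc h ⬝ᵥ M v ≤ l1Norm h * linfNorm (M v) := dotProduct_le_l1Norm_mul_linfNorm h (M v)
    _ ≤ l1Norm h * C := by
        gcongr
        · exact l1Norm_nonneg h
        · exact (hM v).trans (mul_le_of_le_one_right hC hv1)
    _ = C * l1Norm h := mul_comm _ _

theorem sub_mul_le_linfNorm_transposeApply (A B : (Fin n → ℝ) →L[ℝ] (Fin m → ℝ)) {μ ε : ℝ}
    (hε : 0 ≤ ε) (hA : ∀ h, μ * l1Norm h ≤ linfNorm (transposeApply A h))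
    (hAB : ∀ v, linfNorm ((A - B) v) ≤ ε * l1Norm v) (h : Fin m → ℝ) :
    (μ - ε) * l1Norm h ≤ linfNorm (transposeApply B h) := by
  have hE := linfNorm_transposeApply_le (A - B) hε hAB h
  rw [transposeApply_sub, linfNorm_eq_norm] at hE
  have htri := norm_le_insert' (transposeApply A h) (transposeApply B h)
  rw [← linfNorm_eq_norm, ← linfNorm_eq_norm] at htri
  linarith [hA h]

end Transpose

theorem linfNorm_sub_sub_fderiv_le {n m : ℕ} {P : (Fin n → ℝ) → Fin m → ℝ}
    (hP : Differentiable ℝ P) {B : Set (Fin n → ℝ)} (hB : Convex ℝ B) {L : ℝ}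
    (hLip : ∀ a ∈ B, ∀ b ∈ B, ∀ v : Fin n → ℝ,
      linfNorm ((fderiv ℝ P a - fderiv ℝ P b) v) ≤ L * l1Norm (a - b) * l1Norm v)
    {a b : Fin n → ℝ} (ha : a ∈ B) (hb : b ∈ B) :
    linfNorm (P b - P a - fderiv ℝ P a (b - a)) ≤ L / 2 * l1Norm (b - a) ^ 2 := by
  set d := l1Norm (b - a)
  set g : ℝ → Fin m → ℝ := fun t => P (a + t • (b - a)) - P a - t • fderiv ℝ P a (b - a)
  have hg : ∀ t : ℝ, HasDerivAt g ((fderiv ℝ P (a + t • (b - a)) - fderiv ℝ P a) (b - a)) t := by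
    intro t
    have hline : HasDerivAt (fun t : ℝ => a + t • (b - a)) (b - a) t := by
      simpa using ((hasDerivAt_id t).smul_const (b - a)).const_add a
    exact ((((hP _).hasFDerivAt.comp_hasDerivAt t hline).sub_const (P a)).sub
      ((hasDerivAt_id t).smul_const (fderiv ℝ P a (b - a)))).congr_deriv (by simp)
  have hg' : ∀ t ∈ Set.Ico (0 : ℝ) 1,
      ‖(fderiv ℝ P (a + t • (b - a)) - fderiv ℝ P a) (b - a)‖ ≤ L * d ^ 2 * t := by
    intro t ht
    have h := hLip _ (hB.add_smul_sub_mem ha hb ⟨ht.1, ht.2.le⟩) a ha (b - a)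
    rw [add_sub_cancel_left, l1Norm_smul, abs_of_nonneg ht.1, linfNorm_eq_norm] at h
    linarith
  have hB' : ∀ t : ℝ, HasDerivAt (fun t => L * d ^ 2 / 2 * t ^ 2) (L * d ^ 2 * t) t := by
    intro t
    exact ((hasDerivAt_pow 2 t).const_mul (L * d ^ 2 / 2)).congr_deriv (by norm_num; ring)
  have := image_norm_le_of_norm_deriv_right_le_deriv_boundary
    (fun t _ => (hg t).continuousAt.continuousWithinAt) (fun t _ => (hg t).hasDerivWithinAt)
    (by simp [g]) hB' hg' (Set.right_mem_Icc.2 zero_le_one)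
  have hg1 : g 1 = P b - P a - fderiv ℝ P a (b - a) := by simp [g]
  rw [linfNorm_eq_norm, ← hg1]
  convert this using 1
  ring

section Majorant

variable (L μ s : ℝ)

noncomputable def kantorovichPoly (t : ℝ) : ℝ := L / 2 * t ^ 2 - μ * t + s

/-- Newton's method for `kantorovichPoly`, whose derivative is `L t - μ`. -/
noncomputable def newtonStep (t : ℝ) : ℝ := t + kantorovichPoly L μ s t / (μ - L * t)

noncomputable def newtonMajorant (k : ℕ) : ℝ := (newtonStep L μ s)^[k] 0

/-- The smaller root of `kantorovichPoly` when `2 L s < μ²`. -/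
noncomputable def kantorovichRoot : ℝ := μ / L * (1 - √(1 - 2 * L * s / μ ^ 2))

variable {L μ s}

theorem newtonMajorant_succ (k : ℕ) :
    newtonMajorant L μ s (k + 1) = newtonStep L μ s (newtonMajorant L μ s k) :=
  Function.iterate_succ_apply' _ _ _

theorem kantorovichPoly_newtonStep {t : ℝ} (ht : μ - L * t ≠ 0) :
    kantorovichPoly L μ s (newtonStep L μ s t) = L / 2 * (newtonStep L μ s t - t) ^ 2 := by
  unfold newtonStep
  generalize hΔ : kantorovichPoly L μ s t / (μ - L * t) = Δ
  have hf : kantorovichPoly L μ s t = Δ * (μ - L * t) := by rw [← hΔ, div_mul_cancel₀ _ ht]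
  unfold kantorovichPoly at hf ⊢
  linear_combination hf

theorem kantorovichRoot_nonneg (hL : 0 ≤ L) (hμ : 0 ≤ μ) (hs : 0 ≤ s) :
    0 ≤ kantorovichRoot L μ s :=
  mul_nonneg (div_nonneg hμ hL) (sub_nonneg.2 (Real.sqrt_le_one.2 (by
    have : 0 ≤ 2 * L * s / μ ^ 2 := by positivity
    linarith)))

theorem one_sub_two_mul_div_sq_pos (hLs : L * s / μ ^ 2 < 1 / 2) : 0 < 1 - 2 * L * s / μ ^ 2 := by
  rw [mul_assoc, mul_div_assoc]
  linarith

theorem kantorovichRoot_lt_div (hL : 0 < L) (hμ : 0 < μ) (hLs : L * s / μ ^ 2 < 1 / 2) :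
    kantorovichRoot L μ s < μ / L := by
  have := Real.sqrt_pos.2 (one_sub_two_mul_div_sq_pos hLs)
  rw [kantorovichRoot]
  nlinarith [div_pos hμ hL]

theorem kantorovichPoly_eq_mul (hL : L ≠ 0) (hμ : μ ≠ 0) (hLs : L * s / μ ^ 2 < 1 / 2) (t : ℝ) :
    kantorovichPoly L μ s t =
      L / 2 * (t - kantorovichRoot L μ s) * (t - (2 * μ / L - kantorovichRoot L μ s)) := by
  unfold kantorovichPoly kantorovichRoot
  generalize hδ : √(1 - 2 * L * s / μ ^ 2) = δ
  have hδ2 : μ ^ 2 * δ ^ 2 = μ ^ 2 - 2 * L * s := by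
    rw [← hδ, Real.sq_sqrt (one_sub_two_mul_div_sq_pos hLs).le]
    field_simp
  field_simp
  linear_combination hδ2

section LeRoot

variable {t : ℝ}

theorem sub_mul_pos_of_le_kantorovichRoot (hL : 0 < L) (hμ : 0 < μ) (hLs : L * s / μ ^ 2 < 1 / 2)
    (ht : t ≤ kantorovichRoot L μ s) : 0 < μ - L * t := by
  have := (lt_div_iff₀' hL).1 (kantorovichRoot_lt_div hL hμ hLs)
  nlinarith

theorem kantorovichPoly_nonneg_of_le_kantorovichRoot (hL : 0 < L) (hμ : 0 < μ)
    (hLs : L * s / μ ^ 2 < 1 / 2)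
    (ht : t ≤ kantorovichRoot L μ s) : 0 ≤ kantorovichPoly L μ s t := by
  have := kantorovichRoot_lt_div hL hμ hLs
  rw [kantorovichPoly_eq_mul hL.ne' hμ.ne' hLs, mul_div_assoc]
  exact mul_nonneg_of_nonpos_of_nonpos
    (mul_nonpos_of_nonneg_of_nonpos (by positivity) (by linarith)) (by linarith)

theorem le_newtonStep (hL : 0 < L) (hμ : 0 < μ) (hLs : L * s / μ ^ 2 < 1 / 2)
    (ht : t ≤ kantorovichRoot L μ s) : t ≤ newtonStep L μ s t :=
  le_add_of_nonneg_right (div_nonneg (kantorovichPoly_nonneg_of_le_kantorovichRoot hL hμ hLs ht)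
    (sub_mul_pos_of_le_kantorovichRoot hL hμ hLs ht).le)

theorem newtonStep_le_kantorovichRoot (hL : 0 < L) (hμ : 0 < μ) (hLs : L * s / μ ^ 2 < 1 / 2)
    (ht : t ≤ kantorovichRoot L μ s) : newtonStep L μ s t ≤ kantorovichRoot L μ s := by
  have hden := sub_mul_pos_of_le_kantorovichRoot hL hμ hLs ht
  have key : (newtonStep L μ s t - kantorovichRoot L μ s) * (μ - L * t) =
      -(L / 2 * (t - kantorovichRoot L μ s) ^ 2) := by
    rw [newtonStep, add_sub_right_comm, add_mul, div_mul_cancel₀ _ hden.ne',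
      kantorovichPoly_eq_mul hL.ne' hμ.ne' hLs]
    field_simp
    ring
  nlinarith [sq_nonneg (t - kantorovichRoot L μ s)]

end LeRoot

theorem newtonMajorant_le_kantorovichRoot (hL : 0 < L) (hμ : 0 < μ)
    (hLs : L * s / μ ^ 2 < 1 / 2) (hs : 0 ≤ s) (k : ℕ) :
    newtonMajorant L μ s k ≤ kantorovichRoot L μ s := by
  induction k with
  | zero => exact kantorovichRoot_nonneg hL.le hμ.le hs
  | succ k ih => exact (newtonMajorant_succ k).trans_le (newtonStep_le_kantorovichRoot hL hμ hLs ih)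

theorem newtonMajorant_monotone (hL : 0 < L) (hμ : 0 < μ) (hLs : L * s / μ ^ 2 < 1 / 2)
    (hs : 0 ≤ s) : Monotone (newtonMajorant L μ s) :=
  monotone_nat_of_le_succ fun k => (newtonMajorant_succ k).symm ▸
    le_newtonStep hL hμ hLs (newtonMajorant_le_kantorovichRoot hL hμ hLs hs k)

theorem summable_succ_sub_of_monotone {t : ℕ → ℝ} {T : ℝ} (hmono : Monotone t)
    (hT : ∀ k, t k ≤ T) : Summable fun k => t (k + 1) - t k :=
  summable_of_sum_range_le (c := T - t 0) (fun k => sub_nonneg.2 (hmono k.le_succ)) fun k => by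
    rw [Finset.sum_range_sub]
    linarith [hT k, hmono k.zero_le]

theorem tendsto_kantorovichPoly_newtonMajorant (hL : 0 < L) (hμ : 0 < μ)
    (hLs : L * s / μ ^ 2 < 1 / 2) (hs : 0 ≤ s) :
    Tendsto (fun k => kantorovichPoly L μ s (newtonMajorant L μ s k)) atTop (𝓝 0) := by
  have hle := newtonMajorant_le_kantorovichRoot hL hμ hLs hs
  have hsub := (summable_succ_sub_of_monotone (newtonMajorant_monotone hL hμ hLs hs) hle)
  rw [← tendsto_add_atTop_iff_nat 1]
  refine (by simpa using (hsub.tendsto_atTop_zero.pow 2).const_mul (L / 2) :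
    Tendsto (fun k => L / 2 * (newtonMajorant L μ s (k + 1) - newtonMajorant L μ s k) ^ 2) atTop
      (𝓝 0)).congr fun k => ?_
  rw [newtonMajorant_succ, kantorovichPoly_newtonStep
    (sub_mul_pos_of_le_kantorovichRoot hL hμ hLs (hle k)).ne']

end Majorant

theorem div_mul_eq_kantorovichRoot {L μ s : ℝ} (hL : L ≠ 0) (hμ : μ ≠ 0) :
    (1 - √(1 - 2 * (L * s / μ ^ 2))) / (L * s / μ ^ 2) * (s / μ) = kantorovichRoot L μ s := by
  rcases eq_or_ne s 0 with rfl | hs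
  · -- both sides vanish, the left one through `x / 0 = 0`
    simp [kantorovichRoot]
  · rw [kantorovichRoot, show 2 * L * s / μ ^ 2 = 2 * (L * s / μ ^ 2) by ring]
    field_simp

section SparseNewton

variable {n m : ℕ} {P : (Fin n → ℝ) → Fin m → ℝ}

theorem surjective_of_le_linfNorm_transposeApply {A : (Fin n → ℝ) →L[ℝ] (Fin m → ℝ)} {μ : ℝ}
    (hμ : 0 < μ) (hA : ∀ h, μ * l1Norm h ≤ linfNorm (transposeApply A h)) :
    Function.Surjective A := fun b =>
  (exists_apply_eq_of_le_linfNorm_transposeApply A hμ hA b).imp fun _ hv => hv.1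

theorem sub_mul_l1Norm_le_linfNorm_transposeApply_fderiv {B : Set (Fin n → ℝ)} {u0 a : Fin n → ℝ}
    {μ L : ℝ} (hL : 0 ≤ L)
    (hA : ∀ h, μ * l1Norm h ≤ linfNorm (transposeApply (fderiv ℝ P u0) h))
    (hLip : ∀ a ∈ B, ∀ b ∈ B, ∀ v : Fin n → ℝ,
      linfNorm ((fderiv ℝ P a - fderiv ℝ P b) v) ≤ L * l1Norm (a - b) * l1Norm v)
    (hu0B : u0 ∈ B) (ha : a ∈ B) (h : Fin m → ℝ) :
    (μ - L * l1Norm (a - u0)) * l1Norm h ≤ linfNorm (transposeApply (fderiv ℝ P a) h) :=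
  sub_mul_le_linfNorm_transposeApply _ _ (mul_nonneg hL (l1Norm_nonneg _)) hA
    (fun v => by simpa only [l1Norm_sub_comm u0 a] using hLip u0 hu0B a ha v) h

theorem sparseNewton_step (hP : Differentiable ℝ P) {B : Set (Fin n → ℝ)} (hB : Convex ℝ B)
    {u0 : Fin n → ℝ} {μ L s : ℝ} (hμ : 0 < μ) (hL : 0 < L) (hLs : L * s / μ ^ 2 < 1 / 2)
    (hs : linfNorm (P u0) ≤ s) (hball : {v | l1Norm (v - u0) ≤ kantorovichRoot L μ s} ⊆ B)
    (hA : ∀ h, μ * l1Norm h ≤ linfNorm (transposeApply (fderiv ℝ P u0) h))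
    (hLip : ∀ a ∈ B, ∀ b ∈ B, ∀ v : Fin n → ℝ,
      linfNorm ((fderiv ℝ P a - fderiv ℝ P b) v) ≤ L * l1Norm (a - b) * l1Norm v)
    {t : ℝ} (ht : t ≤ kantorovichRoot L μ s) {a w : Fin n → ℝ} (ha : l1Norm (a - u0) ≤ t)
    (hPa : linfNorm (P a) ≤ kantorovichPoly L μ s t) (hw_eq : fderiv ℝ P a w = P a)
    (hw_min : ∀ v, fderiv ℝ P a v = P a → l1Norm w ≤ l1Norm v) :
    l1Norm w ≤ newtonStep L μ s t - t ∧ l1Norm (a - w - u0) ≤ newtonStep L μ s t ∧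
      linfNorm (P (a - w)) ≤ kantorovichPoly L μ s (newtonStep L μ s t) := by
  have hden := sub_mul_pos_of_le_kantorovichRoot hL hμ hLs ht
  have hu0B : u0 ∈ B := hball <| by
    simpa [l1Norm] using kantorovichRoot_nonneg hL.le hμ.le ((linfNorm_nonneg _).trans hs)
  have haB : a ∈ B := hball (ha.trans ht)
  have hlow : ∀ h, (μ - L * t) * l1Norm h ≤ linfNorm (transposeApply (fderiv ℝ P a) h) :=
    fun h => (mul_le_mul_of_nonneg_right (by nlinarith) (l1Norm_nonneg h)).trans
      (sub_mul_l1Norm_le_linfNorm_transposeApply_fderiv hL.le hA hLip hu0B haB h)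
  obtain ⟨v, hv, hvb⟩ := exists_apply_eq_of_le_linfNorm_transposeApply _ hden hlow (P a)
  have hw : l1Norm w ≤ newtonStep L μ s t - t := by
    rw [newtonStep, add_sub_cancel_left, le_div_iff₀ hden]
    nlinarith [hw_min v hv]
  have hnext : l1Norm (a - w - u0) ≤ newtonStep L μ s t := by
    rw [sub_right_comm]
    linarith [l1Norm_sub_le (a - u0) w]
  refine ⟨hw, hnext, ?_⟩
  have htaylor := linfNorm_sub_sub_fderiv_le hP hB hLip haB
    (hball (hnext.trans (newtonStep_le_kantorovichRoot hL hμ hLs ht)))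
  rw [sub_sub_cancel_left, map_neg, hw_eq, sub_neg_eq_add, sub_add_cancel, l1Norm_neg] at htaylor
  rw [kantorovichPoly_newtonStep hden.ne']
  exact htaylor.trans (by gcongr; exact l1Norm_nonneg w)

theorem sparseNewton_invariant (hP : Differentiable ℝ P) {B : Set (Fin n → ℝ)}
    (hB : Convex ℝ B) {u0 : Fin n → ℝ} {μ L s : ℝ} (hμ : 0 < μ) (hL : 0 < L)
    (hLs : L * s / μ ^ 2 < 1 / 2) (hs : linfNorm (P u0) ≤ s)
    (hball : {v | l1Norm (v - u0) ≤ kantorovichRoot L μ s} ⊆ B)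
    (hA : ∀ h, μ * l1Norm h ≤ linfNorm (transposeApply (fderiv ℝ P u0) h))
    (hLip : ∀ a ∈ B, ∀ b ∈ B, ∀ v : Fin n → ℝ,
      linfNorm ((fderiv ℝ P a - fderiv ℝ P b) v) ≤ L * l1Norm (a - b) * l1Norm v)
    {u w : ℕ → Fin n → ℝ} (hu0 : u 0 = u0)
    (hw_eq : ∀ k, fderiv ℝ P (u k) (w k) = P (u k))
    (hw_min : ∀ k, ∀ v, fderiv ℝ P (u k) v = P (u k) → l1Norm (w k) ≤ l1Norm v)
    (hstep : ∀ k, u (k + 1) = u k - w k) (k : ℕ) :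
    l1Norm (u k - u0) ≤ newtonMajorant L μ s k ∧
      linfNorm (P (u k)) ≤ kantorovichPoly L μ s (newtonMajorant L μ s k) ∧
      l1Norm (w k) ≤ newtonMajorant L μ s (k + 1) - newtonMajorant L μ s k := by
  have hle := newtonMajorant_le_kantorovichRoot hL hμ hLs ((linfNorm_nonneg _).trans hs)
  have step k (hk : l1Norm (u k - u0) ≤ newtonMajorant L μ s k ∧
      linfNorm (P (u k)) ≤ kantorovichPoly L μ s (newtonMajorant L μ s k)) :=
    sparseNewton_step hP hB hμ hL hLs hs hball hA hLip (hle k) hk.1 hk.2 (hw_eq k) (hw_min k)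
  have hinv : ∀ k, l1Norm (u k - u0) ≤ newtonMajorant L μ s k ∧
      linfNorm (P (u k)) ≤ kantorovichPoly L μ s (newtonMajorant L μ s k) := by
    intro k
    induction k with
    | zero => simpa [hu0, newtonMajorant, kantorovichPoly, l1Norm] using hs
    | succ k ih =>
      rw [hstep, newtonMajorant_succ]
      exact (step k ih).2
  exact ⟨(hinv k).1, (hinv k).2, newtonMajorant_succ k ▸ (step k (hinv k)).1⟩

end SparseNewton

theorem statement7_general {n m : ℕ} (P : (Fin n → ℝ) → (Fin m → ℝ)) (hP : ContDiff ℝ 1 P)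
    (u0 : Fin n → ℝ) (s : ℝ) (hs : s = linfNorm (P u0))
    (ρ : ℝ) (Bρ : Set (Fin n → ℝ)) (hB : Bρ = {v | l1Norm (v - u0) ≤ ρ})
    (μ0 : ℝ) (hμ0 : 0 < μ0)
    (hA : ∀ h : Fin m → ℝ,
      μ0 * l1Norm h ≤ linfNorm (transposeApply (fderiv ℝ P u0) h))
    (L : ℝ) (hL : 0 < L)
    (hLip : ∀ a ∈ Bρ, ∀ b ∈ Bρ, ∀ v : Fin n → ℝ,
      linfNorm ((fderiv ℝ P a - fderiv ℝ P b) v) ≤ L * l1Norm (a - b) * l1Norm v)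
    (hcond1 : L * s / μ0 ^ 2 < 1 / 2)
    (hcond2 : (1 - Real.sqrt (1 - 2 * (L * s / μ0 ^ 2))) / (L * s / μ0 ^ 2)
        * (s / μ0) ≤ ρ)
    -- a sparse-Newton sequence from `u0` with unit step-size:
    (u w : ℕ → Fin n → ℝ) (hu0 : u 0 = u0)
    (hw_eq : ∀ k, fderiv ℝ P (u k) (w k) = P (u k))
    (hw_min : ∀ k, ∀ v : Fin n → ℝ, fderiv ℝ P (u k) v = P (u k) →
      l1Norm (w k) ≤ l1Norm v)
    (hstep : ∀ k, u (k + 1) = u k - w k) :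
    (∀ k, Function.Surjective (fderiv ℝ P (u k))) ∧
    (∀ k, u k ∈ Bρ) ∧
    ∃ ustar : Fin n → ℝ, Tendsto u atTop (𝓝 ustar) ∧ P ustar = 0 ∧
      l1Norm (u0 - ustar) ≤ μ0 / L * (1 - Real.sqrt (1 - 2 * L * s / μ0 ^ 2)) := by
  subst hB
  have hs0 : 0 ≤ s := hs ▸ linfNorm_nonneg _
  rw [div_mul_eq_kantorovichRoot hL.ne' hμ0.ne'] at hcond2
  have hball : {v | l1Norm (v - u0) ≤ kantorovichRoot L μ0 s} ⊆ {v | l1Norm (v - u0) ≤ ρ} :=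
    fun v hv => le_trans hv hcond2
  have hinv := sparseNewton_invariant (hP.differentiable one_ne_zero)
    (convex_setOf_l1Norm_sub_le u0 ρ) hμ0 hL hcond1 hs.ge hball hA hLip hu0 hw_eq hw_min hstep
  have hle := newtonMajorant_le_kantorovichRoot hL hμ0 hcond1 hs0
  have hmem k : l1Norm (u k - u0) ≤ kantorovichRoot L μ0 s := (hinv k).1.trans (hle k)
  have hu0B : u0 ∈ {v | l1Norm (v - u0) ≤ ρ} :=
    hball (by simpa [l1Norm] using kantorovichRoot_nonneg hL.le hμ0.le hs0)
  refine ⟨fun k => ?_, fun k => hball (hmem k), ?_⟩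
  · exact surjective_of_le_linfNorm_transposeApply
      (sub_mul_pos_of_le_kantorovichRoot hL hμ0 hcond1 (hmem k))
      (sub_mul_l1Norm_le_linfNorm_transposeApply_fderiv hL.le hA hLip hu0B (hball (hmem k)))
  have hdist k :
      dist (u k) (u (k + 1)) ≤ newtonMajorant L μ0 s (k + 1) - newtonMajorant L μ0 s k := by
    rw [dist_eq_norm, hstep, sub_sub_cancel]
    exact (norm_le_l1Norm _).trans (hinv k).2.2
  obtain ⟨ustar, hlim⟩ := cauchySeq_tendsto_of_complete <| cauchySeq_of_dist_le_of_summable _ hdist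
    (summable_succ_sub_of_monotone (newtonMajorant_monotone hL hμ0 hcond1 hs0) hle)
  refine ⟨ustar, hlim, ?_, ?_⟩
  · refine tendsto_nhds_unique ((hP.continuous.tendsto ustar).comp hlim) (squeeze_zero_norm
      (fun k => ?_) (tendsto_kantorovichPoly_newtonMajorant hL hμ0 hcond1 hs0))
    exact (linfNorm_eq_norm _).symm.trans_le (hinv k).2.1
  · rw [l1Norm_sub_comm]
    exact le_of_tendsto ((continuous_l1Norm.tendsto _).comp (hlim.sub_const u0))
      (Eventually.of_forall hmem)

/-- Kantorovich-type convergence of the sparse-Newton method: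
under assumption (A) at `u⁰`, assumption (B) on the ball `B_ρ`, and the
conditions `h = Ls/μ₀² < 1/2`, `((1−√(1−2h))/h)(s/μ₀) ≤ ρ`, every sparse-Newton
sequence from `u⁰` with unit step-size is well defined (each `P'(uᵏ)` is
surjective), stays in `B_ρ`, and converges to a zero `u*` of `P` with
`‖u⁰ − u*‖₁ ≤ (μ₀/L)(1 − √(1 − 2Ls/μ₀²))`. -/
theorem statement7 {n m : ℕ} (P : (Fin n → ℝ) → (Fin m → ℝ)) (hP : ContDiff ℝ 1 P)
    (u0 : Fin n → ℝ) (s : ℝ) (hs : s = linfNorm (P u0))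
    (ρ : ℝ) (hρ : 0 < ρ) (Bρ : Set (Fin n → ℝ)) (hB : Bρ = {v | l1Norm (v - u0) ≤ ρ})
    (μ0 : ℝ) (hμ0 : 0 < μ0)
    (hA : ∀ h : Fin m → ℝ,
      μ0 * l1Norm h ≤ linfNorm (transposeApply (fderiv ℝ P u0) h))
    (L : ℝ) (hL : 0 < L)
    (hLip : ∀ a ∈ Bρ, ∀ b ∈ Bρ, ∀ v : Fin n → ℝ,
      linfNorm ((fderiv ℝ P a - fderiv ℝ P b) v) ≤ L * l1Norm (a - b) * l1Norm v)
    (hcond1 : L * s / μ0 ^ 2 < 1 / 2)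
    (hcond2 : (1 - Real.sqrt (1 - 2 * (L * s / μ0 ^ 2))) / (L * s / μ0 ^ 2)
        * (s / μ0) ≤ ρ)
    -- a sparse-Newton sequence from `u0` with unit step-size:
    (u w : ℕ → Fin n → ℝ) (hu0 : u 0 = u0)
    (hw_eq : ∀ k, fderiv ℝ P (u k) (w k) = P (u k))
    (hw_min : ∀ k, ∀ v : Fin n → ℝ, fderiv ℝ P (u k) v = P (u k) →
      l1Norm (w k) ≤ l1Norm v)
    (hstep : ∀ k, u (k + 1) = u k - w k) :
    (∀ k, Function.Surjective (fderiv ℝ P (u k))) ∧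
    (∀ k, u k ∈ Bρ) ∧
    ∃ ustar : Fin n → ℝ, Tendsto u atTop (𝓝 ustar) ∧ P ustar = 0 ∧
      l1Norm (u0 - ustar) ≤ μ0 / L * (1 - Real.sqrt (1 - 2 * L * s / μ0 ^ 2)) :=
  statement7_general P hP u0 s hs ρ Bρ hB μ0 hμ0 hA L hL hLip hcond1 hcond2 u w hu0 hw_eq hw_min
    hstep
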